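/- Let A be an m×n matrix with integer coefficients, let S_A = {x ∈ ℕ_0^n : Ax = 0} be the solution set of the homogeneous linear Diophantine system Ax = 0, and let S_A^min be the set of nonzero solutions x ∈ S_A such that no other nonzero solution y ∈ S_A satisfies y ≤ x (componentwise) or has carrier strictly contained in the carrier of x. Then every solution in S_A is a linear combination with nonnegative real coefficients of finitely many elements of S_A^min, i.e., S_A ⊆ Cone(S_A^min). -/

import Mathlib

namespace Periodic

/-- An arc of a static graph: a source node, a target node, and a shift. -/
structure Arc (n : ℕ) where
  src : Fin n
  tgt : Fin n
  shift : ℤ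
deriving DecidableEq

/-- A static graph on `n` nodes, given by three matrices with entries in `ℚ ∪ {-∞}`. -/
structure StaticGraph (n : ℕ) where
  Mneg : Matrix (Fin n) (Fin n) (WithBot ℚ)
  Mzero : Matrix (Fin n) (Fin n) (WithBot ℚ)
  Mpos : Matrix (Fin n) (Fin n) (WithBot ℚ)

/-- The matrix associated to shift `s` (the all `-∞` matrix if `s ∉ {-1,0,1}`). -/
def StaticGraph.M {n : ℕ} (G : StaticGraph n) (s : ℤ) : Matrix (Fin n) (Fin n) (WithBot ℚ) :=
  if s = -1 then G.Mneg else if s = 0 then G.Mzero else if s = 1 then G.Mpos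
  else Matrix.of fun _ _ => ⊥

/-- `e` is an arc of `G` iff the corresponding matrix entry is not `-∞`. -/
def StaticGraph.IsArc {n : ℕ} (G : StaticGraph n) (e : Arc n) : Prop :=
  G.M e.shift e.tgt e.src ≠ ⊥

/-- The (rational) weight of an arc. -/
def StaticGraph.w {n : ℕ} (G : StaticGraph n) (e : Arc n) : ℚ :=
  WithBot.unbotD 0 (G.M e.shift e.tgt e.src)

/-- A path in the static graph `G`: a first node together with a compatible list of arcs. -/
structure SPath {n : ℕ} (G : StaticGraph n) where
  first : Fin n
  arcs : List (Arc n)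
  valid : ∀ e ∈ arcs, G.IsArc e
  startOk : ∀ e ∈ arcs.head?, e.src = first
  chainOk : arcs.Chain' (fun e f => e.tgt = f.src)

namespace SPath

variable {n : ℕ} {G : StaticGraph n}

/-- The last node of a path. -/
def last (p : SPath G) : Fin n := (p.arcs.getLast?).elim p.first Arc.tgt

/-- The length of a path. -/
def len (p : SPath G) : ℕ := p.arcs.length

/-- The shift of a path. -/
def shift (p : SPath G) : ℤ := (p.arcs.map Arc.shift).sum

/-- The weight of a path. -/
def weight (p : SPath G) : ℚ := (p.arcs.map G.w).sum

/-- The sum of the shifts of the first `i` arcs of a path. -/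
def prefixShift (p : SPath G) (i : ℕ) : ℤ := ((p.arcs.take i).map Arc.shift).sum

/-- The left-shift of a path: the minimum of all prefix sums of arc shifts. -/
def lshift (p : SPath G) : ℤ :=
  Finset.univ.inf' Finset.univ_nonempty
    (fun i : Fin (p.arcs.length + 1) => p.prefixShift i)

/-- A path is a circuit if its first and last nodes coincide. -/
def IsCircuit (p : SPath G) : Prop := p.first = p.last

/-- The sequence of nodes visited by a path. -/
def nodes (p : SPath G) : List (Fin n) := p.first :: p.arcs.map Arc.tgt

/-- An elementary circuit: a nonempty circuit whose nodes, except the last one,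
are pairwise distinct. -/
def IsElemCircuit (p : SPath G) : Prop :=
  p.IsCircuit ∧ p.arcs ≠ [] ∧ p.nodes.dropLast.Nodup

/-- Concatenation of two paths with matching endpoints. -/
def append (p q : SPath G) (h : q.first = p.last) : SPath G where
  first := p.first
  arcs := p.arcs ++ q.arcs
  valid := by
    intro e he
    rcases List.mem_append.mp he with h' | h'
    · exact p.valid e h'
    · exact q.valid e h'
  startOk := by
    intro e he
    cases hp : p.arcs with
    | nil =>
      rw [hp] at he
      simp only [List.nil_append] at he
      rw [q.startOk e he, h]
      simp [SPath.last, hp]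
    | cons a l =>
      rw [hp] at he
      simp only [List.cons_append, List.head?_cons, Option.mem_def, Option.some.injEq] at he
      subst he
      exact p.startOk a (by rw [hp]; rfl)
  chainOk := by
    apply List.IsChain.append p.chainOk q.chainOk
    intro x hx y hy
    have h1 : y.src = q.first := q.startOk y hy
    have hx' : p.arcs.getLast? = some x := hx
    have h2 : p.last = x.tgt := by simp [SPath.last, hx']
    show x.tgt = y.src
    rw [h1, h, h2]

theorem last_append (p q : SPath G) (h : q.first = p.last) :
    (p.append q h).last = q.last := by
  cases hq : q.arcs with
  | nil =>
    have hql : q.last = q.first := by simp [SPath.last, hq]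
    simp [SPath.append, SPath.last, hq, hql, h]
  | cons a l =>
    have hx : (a :: l).getLast? = some ((a :: l).getLast (by simp)) :=
      List.getLast?_eq_getLast (by simp)
    simp [SPath.append, SPath.last, hq, List.getLast?_append, hx]

/-- The empty path at node `i`. -/
def nil (G : StaticGraph n) (i : Fin n) : SPath G :=
  ⟨i, [], by simp, by simp, List.isChain_nil⟩

/-- Auxiliary construction for powers of a circuit. -/
def npowAux (q : SPath G) (h : q.IsCircuit) :
    (x : ℕ) → {r : SPath G // r.first = q.first ∧ r.last = q.first}
  | 0 => ⟨SPath.nil G q.first, rfl, by simp [SPath.last, SPath.nil]⟩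
  | x + 1 =>
    let r := npowAux q h x
    ⟨q.append r.1 (r.2.1.trans h), rfl, (last_append q r.1 _).trans r.2.2⟩

/-- The `x`-fold concatenation `q^x` of a circuit `q` with itself. -/
def npow (q : SPath G) (h : q.IsCircuit) (x : ℕ) : SPath G := (npowAux q h x).1

theorem npow_first (q : SPath G) (h : q.IsCircuit) (x : ℕ) :
    (npow q h x).first = q.first := (npowAux q h x).2.1

theorem npow_last (q : SPath G) (h : q.IsCircuit) (x : ℕ) :
    (npow q h x).last = q.first := (npowAux q h x).2.2

/-- Concatenation of a nonempty list of paths with matching endpoints. -/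
def concatChain (p : SPath G) :
    (l : List (SPath G)) → (p :: l).Chain' (fun a b => b.first = a.last) →
      {r : SPath G // r.first = p.first}
  | [], _ => ⟨p, rfl⟩
  | q :: l, h =>
    let rest := concatChain q l (List.isChain_cons.mp h).2
    ⟨p.append rest.1 (rest.2.trans ((List.isChain_cons.mp h).1 q rfl)), rfl⟩

/-- The path `p`, started at shift `k`, visits only shifts belonging to `S`;
i.e., `(p, k)` represents a path of the `S`-periodic graph `G_S`. -/
def shiftsIn (p : SPath G) (k : ℤ) (S : Set ℤ) : Prop :=
  ∀ i ≤ p.arcs.length, k + p.prefixShift i ∈ S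

end SPath

/-- The set of positive integers (the paper's `ℕ`). -/
def Spos : Set ℤ := {k | 0 < k}

/-- The set of integers `k` with `-n ≤ k ≤ n`. -/
def Sint (n : ℕ) : Set ℤ := {k | -(n : ℤ) ≤ k ∧ k ≤ (n : ℤ)}

/-- The `S`-periodic graph `G_S` contains an `∞`-weight path: there are nodes `u, v` of `G_S`
and an infinite sequence of paths of `G_S` from `u` to `v` with strictly increasing weights. -/
def HasInfWeightPath {n : ℕ} (G : StaticGraph n) (S : Set ℤ) : Prop :=
  ∃ u v : Fin n × ℤ, ∃ (p : ℕ → SPath G) (k : ℕ → ℤ),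
    (∀ h, (p h).shiftsIn (k h) S) ∧
    (∀ h, ((p h).first, k h) = u ∧ ((p h).last, k h + (p h).shift) = v) ∧
    ∀ h, (p h).weight < (p (h + 1)).weight

/-- The `S`-periodic graph `G_S` contains a circuit with positive weight. -/
def HasPosWeightCircuit {n : ℕ} (G : StaticGraph n) (S : Set ℤ) : Prop :=
  ∃ (p : SPath G) (k : ℤ), p.shiftsIn k S ∧ p.IsCircuit ∧ p.shift = 0 ∧ 0 < p.weight

end Periodic

namespace Periodic

variable {n : ℕ} {G : StaticGraph n}

/-- The inner nodes of a path: all visited nodes except the first and the last one. -/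
def SPath.innerNodes (p : SPath G) : List (Fin n) := (p.nodes.drop 1).dropLast

/-- `p` splits as the concatenation `u q v`. -/
def Splits (p u q v : SPath G) : Prop :=
  p.first = u.first ∧ p.arcs = u.arcs ++ (q.arcs ++ v.arcs) ∧
    q.first = u.last ∧ v.first = q.last

/-- The elementary circuit `q` can be cut out of `p = u q v`: all of its inner nodes
occur somewhere else in the remaining path `u v`. -/
def Removable (p u q v : SPath G) : Prop :=
  Splits p u q v ∧ q.IsElemCircuit ∧
    ∀ x ∈ q.innerNodes, x ∈ u.nodes ∨ x ∈ v.nodes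

/-- One step of the decomposition: cut the removable elementary circuit `q` out of `p`,
obtaining `p₂`. -/
def CutStep (p p₂ q : SPath G) : Prop :=
  ∃ u v, Removable p u q v ∧ p₂.first = u.first ∧ p₂.arcs = u.arcs ++ v.arcs

/-- `IsCPD p p' Q` : `(p', Q)` is a complete path decomposition of `p`, where the
multiset `Q` records the removed elementary circuits with their multiplicities. -/
inductive IsCPD : SPath G → SPath G → Multiset (SPath G) → Prop
  | done (p : SPath G) (h : ∀ u q v, ¬ Removable p u q v) : IsCPD p p 0
  | step (p p₂ p' q : SPath G) (Q : Multiset (SPath G)) :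
      CutStep p p₂ q → IsCPD p₂ p' Q → IsCPD p p' (q ::ₘ Q)

/-- Assumption A: all circuits of the decomposition have nonzero shift, and no two distinct
circuits have both the same source node and the same shift. -/
def AssumptionA (Q : Multiset (SPath G)) : Prop :=
  (∀ q ∈ Q, q.shift ≠ 0) ∧
    ∀ q ∈ Q, ∀ r ∈ Q, q ≠ r → (q.first, q.shift) ≠ (r.first, r.shift)

/-- `ps` is a factorization of the path `p` into consecutive subpaths. -/
def IsFactorization (p : SPath G) (ps : List (SPath G)) : Prop :=
  ps ≠ [] ∧ ps.Chain' (fun a b => b.first = a.last) ∧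
    (∀ q ∈ ps.head?, q.first = p.first) ∧ p.arcs = (ps.map SPath.arcs).flatten

/-- One move of the canonical-path-composition algorithm: a factor which is a circuit with
negative shift is postponed, or a factor which is a circuit with positive shift is
anticipated. -/
inductive MoveStep : List (SPath G) → List (SPath G) → Prop
  | postpone (a b d : List (SPath G)) (c : SPath G) (hc : c.IsCircuit) (hs : c.shift < 0) :
      MoveStep (a ++ c :: (b ++ d)) (a ++ (b ++ c :: d))
  | anticipate (a b d : List (SPath G)) (c : SPath G) (hc : c.IsCircuit) (hs : 0 < c.shift) :
      MoveStep (a ++ (b ++ c :: d)) (a ++ c :: (b ++ d))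

/-- Weights of pseudo-circuits of `G_S` from node `(i, 0)` to node `(i, s)`. -/
def PCWeights (G : StaticGraph n) (S : Set ℤ) (i : Fin n) (s : ℤ) : Set ℚ :=
  {w | ∃ p : SPath G, p.shiftsIn 0 S ∧ p.first = i ∧ p.last = i ∧ p.shift = s ∧ p.weight = w}

/-- The path `r^{(h)} = q₁^{(-s₂)·h} p' q₂^{s₁·h}`. -/
def rpath (q₁ p' q₂ : SPath G)
    (hc₁ : q₁.IsCircuit) (hc₂ : q₂.IsCircuit)
    (h₁ : p'.first = q₁.last) (h₂ : q₂.first = p'.last) (h : ℕ) : SPath G :=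
  (SPath.npow q₁ hc₁ ((-q₂.shift).toNat * h)).append
    (p'.append (SPath.npow q₂ hc₂ (q₁.shift.toNat * h))
      ((SPath.npow_first q₂ hc₂ _).trans h₂))
    ((h₁.trans hc₁.symm).trans (SPath.npow_last q₁ hc₁ _).symm)

/-- `x` is a nonzero solution in `S` which is minimal (componentwise) and has minimal
carrier among nonzero solutions. -/
def isMinSol {ι : Type*} (S : Set (ι → ℕ)) (x : ι → ℕ) : Prop :=
  x ∈ S ∧ x ≠ 0 ∧
    ∀ y ∈ S, y ≠ x → y ≠ 0 → ¬ y ≤ x ∧ ¬ ({i | y i ≠ 0} ⊂ {i | x i ≠ 0})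

/-- Solutions `(y, z) ∈ ℕ₀^m × ℕ₀^(m-1)` of the Diophantine system
`z_l = ∑_{j ≤ l} s_j y_j` (for `l ∈ [1, m-1]`) and `∑_j s_j y_j = 0`. -/
def DioSol (m : ℕ) (s : Fin m → ℤ) : Set (Fin m ⊕ Fin (m - 1) → ℕ) :=
  {x | (∀ l : Fin (m - 1), (x (Sum.inr l) : ℤ) =
          ∑ j ∈ Finset.univ.filter (fun j : Fin m => (j : ℕ) ≤ (l : ℕ)),
            s j * (x (Sum.inl j) : ℤ)) ∧
       (∑ j : Fin m, s j * (x (Sum.inl j) : ℤ)) = 0}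

/-- The candidate minimal solution `x^{(i,j)}`: `y_i = -s_j/g`, `y_j = s_i/g`,
`z_l = s_i·(-s_j)/g` for `l ∈ [i, j-1]`, all other entries `0`, where `g = gcd(s_i, -s_j)`. -/
def dioMinVec (m : ℕ) (s : Fin m → ℤ) (i j : Fin m) : Fin m ⊕ Fin (m - 1) → ℕ :=
  fun l => match l with
  | Sum.inl a =>
      if a = i then (s j).natAbs / Int.gcd (s i) (s j)
      else if a = j then (s i).natAbs / Int.gcd (s i) (s j)
      else 0
  | Sum.inr a =>
      if (i : ℕ) ≤ (a : ℕ) ∧ (a : ℕ) < (j : ℕ)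
      then (s i).natAbs * ((s j).natAbs / Int.gcd (s i) (s j))
      else 0

end Periodic

open Periodic Periodic.SPath


private lemma exists_minsol {m N : ℕ} (A : Matrix (Fin m) (Fin N) ℤ) (x : Fin N → ℕ)
    (hx : A.mulVec (fun i => (x i : ℤ)) = 0) (hx0 : x ≠ 0) :
    ∃ y : Fin N → ℕ, isMinSol {y : Fin N → ℕ | A.mulVec (fun j => (y j : ℤ)) = 0} y ∧
      ∀ j, y j ≠ 0 → x j ≠ 0 := by
  classical
  set S := {y : Fin N → ℕ | A.mulVec (fun j => (y j : ℤ)) = 0} with hS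
  set T := {z : Fin N → ℕ | z ∈ S ∧ z ≠ 0 ∧ ∀ j, z j ≠ 0 → x j ≠ 0} with hT
  have hxT : x ∈ T := ⟨hx, hx0, fun j h => h⟩
  let card : (Fin N → ℕ) → ℕ := fun z => (Finset.univ.filter (fun j => z j ≠ 0)).card
  set C1 := {c : ℕ | ∃ z ∈ T, card z = c} with hC1
  have hC1ne : C1.Nonempty := ⟨card x, x, hxT, rfl⟩
  obtain ⟨z₁, hz₁T, hz₁c⟩ : ∃ z ∈ T, card z = sInf C1 := Nat.sInf_mem hC1ne
  set C2 := {s : ℕ | ∃ z ∈ T, card z = sInf C1 ∧ ∑ j, z j = s} with hC2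
  have hC2ne : C2.Nonempty := ⟨∑ j, z₁ j, z₁, hz₁T, hz₁c, rfl⟩
  obtain ⟨z, hzT, hzc, hzs⟩ : ∃ z ∈ T, card z = sInf C1 ∧ ∑ j, z j = sInf C2 :=
    Nat.sInf_mem hC2ne
  refine ⟨z, ⟨hzT.1, hzT.2.1, ?_⟩, hzT.2.2⟩
  intro y hyS hyne hy0
  constructor
  · intro hle
    have hyT : y ∈ T := ⟨hyS, hy0, fun j h => hzT.2.2 j
      (fun hzj => h (Nat.le_antisymm (hzj ▸ hle j) (Nat.zero_le _)))⟩
    have hsub : (Finset.univ.filter (fun j => y j ≠ 0)) ⊆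
        (Finset.univ.filter (fun j => z j ≠ 0)) := by
      intro j hj
      simp only [Finset.mem_filter, Finset.mem_univ, true_and] at hj ⊢
      intro hzj; exact hj (Nat.le_antisymm (hzj ▸ hle j) (Nat.zero_le _))
    have hcle : card y ≤ card z := Finset.card_le_card hsub
    have hcge : sInf C1 ≤ card y := Nat.sInf_le ⟨y, hyT, rfl⟩
    have hcy : card y = sInf C1 := le_antisymm (hzc ▸ hcle) hcge
    obtain ⟨i, hi⟩ : ∃ i, y i ≠ z i := Function.ne_iff.mp hyne
    have hsum : ∑ j, y j < ∑ j, z j :=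
      Finset.sum_lt_sum (fun j _ => hle j) ⟨i, Finset.mem_univ i, lt_of_le_of_ne (hle i) hi⟩
    have : sInf C2 ≤ ∑ j, y j := Nat.sInf_le ⟨y, hyT, hcy, rfl⟩
    omega
  · intro hss
    have hyT : y ∈ T := ⟨hyS, hy0, fun j h => hzT.2.2 j (hss.1 h)⟩
    have hsub : (Finset.univ.filter (fun j => y j ≠ 0)) ⊆
        (Finset.univ.filter (fun j => z j ≠ 0)) := by
      intro j hj
      simp only [Finset.mem_filter, Finset.mem_univ, true_and] at hj ⊢
      exact hss.1 hj
    obtain ⟨i, hiz, hiy⟩ : ∃ i ∈ {i | z i ≠ 0}, i ∉ {i | y i ≠ 0} :=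
      Set.not_subset.mp hss.2
    have hclt : card y < card z := Finset.card_lt_card
      ((Finset.ssubset_iff_of_subset hsub).mpr ⟨i, by
        simpa using hiz, by simpa using hiy⟩)
    have hcge : sInf C1 ≤ card y := Nat.sInf_le ⟨y, hyT, rfl⟩
    omega

private lemma cone_decomp {m N : ℕ} (A : Matrix (Fin m) (Fin N) ℤ) :
    ∀ (c : ℕ) (x : Fin N → ℕ), (Finset.univ.filter (fun j => x j ≠ 0)).card ≤ c →
    A.mulVec (fun i => (x i : ℤ)) = 0 →
    ∃ (k : ℕ) (v : Fin k → Fin N → ℕ) (lam : Fin k → ℝ),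
      (∀ i, isMinSol {y : Fin N → ℕ | A.mulVec (fun j => (y j : ℤ)) = 0} (v i)) ∧
      (∀ i, 0 ≤ lam i) ∧
      (fun j => (x j : ℝ)) = ∑ i, lam i • (fun j => ((v i j : ℝ))) := by
  classical
  intro c
  induction c with
  | zero =>
    intro x hcard hx
    have hx0 : ∀ j, x j = 0 := by
      intro j
      by_contra h
      have : j ∈ Finset.univ.filter (fun j => x j ≠ 0) := by simpa using h
      have := Finset.card_pos.mpr ⟨j, this⟩
      omega
    exact ⟨0, Fin.elim0, Fin.elim0, fun i => i.elim0, fun i => i.elim0, by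
      funext j; simp [hx0 j]⟩
  | succ c ih =>
    intro x hcard hx
    by_cases hx0 : x = 0
    · exact ⟨0, Fin.elim0, Fin.elim0, fun i => i.elim0, fun i => i.elim0, by
        funext j; simp [hx0]⟩
    obtain ⟨y, hy, hysupp⟩ := exists_minsol A x hx hx0
    have hyS : A.mulVec (fun j => (y j : ℤ)) = 0 := hy.1
    have hy0 : y ≠ 0 := hy.2.1
    have hyne : (Finset.univ.filter (fun j => y j ≠ 0)).Nonempty := by
      obtain ⟨j, hj⟩ := Function.ne_iff.mp hy0
      exact ⟨j, by simpa using hj⟩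
    obtain ⟨i₀, hi₀mem, hi₀min⟩ := Finset.exists_min_image
      (Finset.univ.filter (fun j => y j ≠ 0)) (fun i => (x i : ℚ) / (y i : ℚ)) hyne
    have hyi₀ : y i₀ ≠ 0 := by simpa using hi₀mem
    have hyi₀pos : 0 < y i₀ := Nat.pos_of_ne_zero hyi₀
    -- key inequality
    have key : ∀ j, x i₀ * y j ≤ x j * y i₀ := by
      intro j
      by_cases hyj : y j = 0
      · simp [hyj]
      · have hmin := hi₀min j (by simpa using hyj)
        have h0 : (0 : ℚ) < (y i₀ : ℚ) := by exact_mod_cast hyi₀pos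
        have h0j : (0 : ℚ) < (y j : ℚ) := by
          exact_mod_cast Nat.pos_of_ne_zero hyj
        have := (div_le_div_iff₀ h0 h0j).mp hmin
        exact_mod_cast this
    set x' : Fin N → ℕ := fun j => x j * y i₀ - x i₀ * y j with hx'def
    have hx'cast : (fun j => ((x' j : ℤ))) =
        (y i₀ : ℤ) • (fun j => (x j : ℤ)) - (x i₀ : ℤ) • (fun j => (y j : ℤ)) := by
      funext j
      simp only [Pi.sub_apply, Pi.smul_apply, smul_eq_mul, hx'def]
      rw [Int.ofNat_sub (key j)]
      push_cast
      ring
    have hx' : A.mulVec (fun j => (x' j : ℤ)) = 0 := by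
      rw [hx'cast, Matrix.mulVec_sub, Matrix.mulVec_smul, Matrix.mulVec_smul, hx, hyS]
      simp
    have hx'i₀ : x' i₀ = 0 := by simp [hx'def]
    have hxi₀ : x i₀ ≠ 0 := hysupp i₀ hyi₀
    have hi₀x : i₀ ∈ Finset.univ.filter (fun j => x j ≠ 0) := by simpa using hxi₀
    have hsub : (Finset.univ.filter (fun j => x' j ≠ 0)) ⊆
        (Finset.univ.filter (fun j => x j ≠ 0)).erase i₀ := by
      intro j hj
      simp only [Finset.mem_filter, Finset.mem_univ, true_and] at hj
      rw [Finset.mem_erase]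
      refine ⟨fun h => hj (h ▸ hx'i₀), ?_⟩
      simp only [Finset.mem_filter, Finset.mem_univ, true_and]
      intro hxj
      exact hj (by simp [hx'def, hxj])
    have hcard' : (Finset.univ.filter (fun j => x' j ≠ 0)).card ≤ c := by
      have h1 := Finset.card_le_card hsub
      have h2 := Finset.card_erase_of_mem hi₀x
      have h3 := Finset.card_pos.mpr ⟨i₀, hi₀x⟩
      omega
    obtain ⟨k, v, lam, hmins, hpos, heq⟩ := ih x' hcard' hx'
    have hy' : (y i₀ : ℝ) ≠ 0 := Nat.cast_ne_zero.mpr hyi₀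
    have hy'pos : (0 : ℝ) < (y i₀ : ℝ) := by exact_mod_cast hyi₀pos
    refine ⟨k + 1, Fin.cons y v,
      Fin.cons ((x i₀ : ℝ) / (y i₀ : ℝ)) (fun i => lam i / (y i₀ : ℝ)), ?_, ?_, ?_⟩
    · intro i
      refine Fin.cases ?_ ?_ i
      · simpa using hy
      · intro i; simpa using hmins i
    · intro i
      refine Fin.cases ?_ ?_ i
      · simp only [Fin.cons_zero]
        positivity
      · intro i
        simp only [Fin.cons_succ]
        exact div_nonneg (hpos i) (le_of_lt hy'pos)
    · funext j
      have hnat : x' j + x i₀ * y j = x j * y i₀ := Nat.sub_add_cancel (key j)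
      have hcastnat : (x' j : ℝ) + (x i₀ : ℝ) * (y j : ℝ) = (x j : ℝ) * (y i₀ : ℝ) := by
        exact_mod_cast congrArg (fun t : ℕ => (t : ℝ)) hnat
      have hx'j : (x' j : ℝ) = ∑ i, lam i * (v i j : ℝ) := by
        have := congrFun heq j
        simpa [Finset.sum_apply] using this
      simp only [Finset.sum_apply, Pi.smul_apply, smul_eq_mul, Fin.sum_univ_succ,
        Fin.cons_zero, Fin.cons_succ]
      have hsum : ∑ i, lam i / (y i₀ : ℝ) * (v i j : ℝ)
          = (∑ i, lam i * (v i j : ℝ)) / (y i₀ : ℝ) := by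
        rw [Finset.sum_div]
        exact Finset.sum_congr rfl fun i _ => by ring
      rw [hsum, ← hx'j, div_mul_eq_mul_div, ← add_div, eq_div_iff hy']
      linarith [hcastnat]

theorem stmt10 {m N : ℕ} (A : Matrix (Fin m) (Fin N) ℤ) (x : Fin N → ℕ)
    (hx : A.mulVec (fun i => (x i : ℤ)) = 0) :
    ∃ (k : ℕ) (v : Fin k → Fin N → ℕ) (lam : Fin k → ℝ),
      (∀ i, isMinSol {y : Fin N → ℕ | A.mulVec (fun j => (y j : ℤ)) = 0} (v i)) ∧
      (∀ i, 0 ≤ lam i) ∧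
      (fun j => (x j : ℝ)) = ∑ i, lam i • (fun j => ((v i j : ℝ))) :=
  cone_decomp A _ x le_rfl hx
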